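/- arXiv:2210.16082 — 4 statements merged into one kernel-verified Lean document; each statement's English description precedes it below -/
import Mathlib

section
/- Let f, g be admissible circle densities with cumulative distribution functions F, G, corresponding measures μ, ν on S¹ = ℝ/ℤ, and let I(α) = ∫₀¹ (F⁻¹(t) − G⁻¹(t − α))² dt. If α* ∈ ℝ attains the infimum of I over ℝ, then the map T : S¹ → S¹ induced by t ↦ G⁻¹(F(t) − α*) (taken modulo 1) satisfies T_*μ = ν and ∫_{S¹} d(x, T(x))² dμ(x) = inf_{α ∈ ℝ} I(α); in particular T is an optimal transport map from μ to ν for the cost d² on the circle. -/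
/-!
Write `u x = G⁻¹(F x - α*)` for the lift of `T` to `ℝ`; it is increasing with
`u (x + 1) = u x + 1` and `u' = f / g ∘ u`. After the substitution `t = F x`, the condition
`I'(α*) = 0` says that `∫₀¹ (x - u x) u' x dx = 0`, and because `x - u x` is periodic this is
equivalent to the displacement `x - u x` having mean zero. So a primitive `Φ` of
`2 (x - u x)` is `1`-periodic and descends to a potential `φ` on the circle. Since `u` is
monotone, `z ↦ (z - u x)² - Φ z` is minimal at `z = x`. Hence `φ` and its
`d²`-transform `ψ` satisfy `φ x + ψ y ≤ d(x, y)²`, with equality on the graph of `T`, where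
`d(x, T x) = |x - u x|`. Integrating against `μ` and using `T_*μ = ν` (change of variables by
`u`) gives the value of the cost, and for every `S` with `S_*μ = ν` it gives
`∫ d(x, S x)² dμ ≥ ∫ φ dμ + ∫ ψ dν = ∫ d(x, T x)² dμ`.
-/

open MeasureTheory Set Function intervalIntegral
open scoped ENNReal

theorem hasDerivAt_intervalIntegral_of_continuous_deriv {E : Type*} [NormedAddCommGroup E]
    [NormedSpace ℝ E] {F F' : ℝ → ℝ → E} {a b x₀ : ℝ}
    (hF : Continuous (uncurry F)) (hF' : Continuous (uncurry F'))
    (hderiv : ∀ x t, HasDerivAt (fun x => F x t) (F' x t) x) :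
    HasDerivAt (fun x => ∫ t in a..b, F x t) (∫ t in a..b, F' x₀ t) x₀ := by
  obtain ⟨C, hC⟩ := (isCompact_closedBall x₀ 1 |>.prod isCompact_uIcc)
    |>.exists_bound_of_continuousOn hF'.continuousOn
  refine (hasDerivAt_integral_of_dominated_loc_of_deriv_le (bound := fun _ => C)
    (Metric.closedBall_mem_nhds x₀ one_pos) ?_ ?_ ?_ ?_ intervalIntegrable_const ?_).2
  · exact .of_forall fun x => (hF.comp (Continuous.prodMk_right x)).aestronglyMeasurable
  · exact (hF.comp (Continuous.prodMk_right x₀)).intervalIntegrable a b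
  · exact (hF'.comp (Continuous.prodMk_right x₀)).aestronglyMeasurable
  · exact .of_forall fun t ht x hx => hC (x, t) ⟨hx, uIoc_subset_uIcc ht⟩
  · exact .of_forall fun t _ x _ => hderiv x t

structure IsAdmissibleCDF (p P : ℝ → ℝ) : Prop where
  continuous : Continuous p
  pos : ∀ t, 0 < p t
  periodic : Periodic p 1
  integral_eq_one : ∫ t in (0:ℝ)..1, p t = 1
  eq_integral : ∀ t, P t = ∫ τ in (0:ℝ)..t, p τ

namespace IsAdmissibleCDF

variable {p P Pinv : ℝ → ℝ}

theorem hasDerivAt (hP : IsAdmissibleCDF p P) (t : ℝ) : HasDerivAt P (p t) t := by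
  rw [show P = _ from funext hP.eq_integral]
  exact (hP.continuous.integral_hasStrictDerivAt 0 t).hasDerivAt

theorem strictMono (hP : IsAdmissibleCDF p P) : StrictMono P :=
  strictMono_of_hasDerivAt_pos hP.hasDerivAt hP.pos

theorem continuous_cdf (hP : IsAdmissibleCDF p P) : Continuous P :=
  continuous_iff_continuousAt.2 fun t => (hP.hasDerivAt t).continuousAt

theorem map_zero (hP : IsAdmissibleCDF p P) : P 0 = 0 := by
  simp [hP.eq_integral]

theorem map_one (hP : IsAdmissibleCDF p P) : P 1 = 1 := by
  rw [hP.eq_integral, hP.integral_eq_one]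

theorem add_one (hP : IsAdmissibleCDF p P) (t : ℝ) : P (t + 1) = P t + 1 := by
  rw [hP.eq_integral, hP.eq_integral, ← integral_add_adjacent_intervals
    (hP.continuous.intervalIntegrable 0 t) (hP.continuous.intervalIntegrable t (t + 1)),
    hP.periodic.intervalIntegral_add_eq t 0, zero_add, hP.integral_eq_one]

theorem strictMono_inv (hP : IsAdmissibleCDF p P) (hinv : RightInverse Pinv P) :
    StrictMono Pinv :=
  (hP.strictMono.orderIsoOfRightInverse P Pinv hinv).symm.strictMono

theorem continuous_inv (hP : IsAdmissibleCDF p P) (hinv : RightInverse Pinv P) :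
    Continuous Pinv :=
  (hP.strictMono.orderIsoOfRightInverse P Pinv hinv).symm.continuous

theorem hasDerivAt_inv (hP : IsAdmissibleCDF p P) (hinv : RightInverse Pinv P) (y : ℝ) :
    HasDerivAt Pinv (p (Pinv y))⁻¹ y :=
  .of_local_left_inverse (hP.continuous_inv hinv).continuousAt (hP.hasDerivAt _)
    (hP.pos _).ne' (.of_forall hinv)

theorem inv_add_one (hP : IsAdmissibleCDF p P) (hinv : RightInverse Pinv P) (y : ℝ) :
    Pinv (y + 1) = Pinv y + 1 :=
  hP.strictMono.injective (by rw [hinv, hP.add_one, hinv])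

theorem integral_comp_mul (hP : IsAdmissibleCDF p P) {k : ℝ → ℝ} (hk : Continuous k) :
    ∫ x in (0:ℝ)..1, k (P x) * p x = ∫ t in (0:ℝ)..1, k t := by
  simpa [hP.map_zero, hP.map_one] using integral_comp_mul_deriv (a := 0) (b := 1)
    (fun x _ => hP.hasDerivAt x) hP.continuous.continuousOn hk

end IsAdmissibleCDF

/-- `(x - u x)(1 - u' x)` is half the derivative of `(x - u x)²`, which takes the same value at
`0` and `1`. -/
theorem integral_sub_eq_zero_of_integral_sub_mul_deriv_eq_zero {u u' : ℝ → ℝ}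
    (hu : ∀ x, HasDerivAt u (u' x) x) (hu' : Continuous u') (hu1 : u 1 = u 0 + 1)
    (h : ∫ x in (0:ℝ)..1, (x - u x) * u' x = 0) : ∫ x in (0:ℝ)..1, (x - u x) = 0 := by
  have hcont : Continuous u := continuous_iff_continuousAt.2 fun x => (hu x).continuousAt
  have hsq : ∫ x in (0:ℝ)..1, 2 * ((x - u x) * (1 - u' x)) = 0 := by
    rw [integral_eq_sub_of_hasDerivAt (f := fun x => (x - u x) ^ 2)
      (fun x _ => (((hasDerivAt_id x).sub (hu x)).pow 2).congr_deriv (by simp; ring))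
      ((by fun_prop : Continuous fun x => 2 * ((x - u x) * (1 - u' x))).intervalIntegrable _ _),
      hu1]
    ring
  rw [intervalIntegral.integral_const_mul, mul_eq_zero, or_iff_right two_ne_zero] at hsq
  calc ∫ x in (0:ℝ)..1, (x - u x)
      = (∫ x in (0:ℝ)..1, (x - u x) * (1 - u' x)) + ∫ x in (0:ℝ)..1, (x - u x) * u' x := by
        rw [← intervalIntegral.integral_add
          ((by fun_prop : Continuous fun x => (x - u x) * (1 - u' x)).intervalIntegrable _ _)
          ((by fun_prop : Continuous fun x => (x - u x) * u' x).intervalIntegrable _ _)]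
        exact integral_congr fun x _ => by ring
    _ = 0 := by rw [hsq, h, add_zero]

section Lift

variable {f g F G Finv Ginv : ℝ → ℝ}

theorem strictMono_lift (hF : IsAdmissibleCDF f F) (hG : IsAdmissibleCDF g G)
    (hGinv : RightInverse Ginv G) (α : ℝ) : StrictMono fun x => Ginv (F x - α) :=
  (hG.strictMono_inv hGinv).comp fun _ _ h => sub_lt_sub_right (hF.strictMono h) α

theorem continuous_lift (hF : IsAdmissibleCDF f F) (hG : IsAdmissibleCDF g G)
    (hGinv : RightInverse Ginv G) (α : ℝ) : Continuous fun x => Ginv (F x - α) :=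
  (hG.continuous_inv hGinv).comp (hF.continuous_cdf.sub continuous_const)

theorem lift_add_one (hF : IsAdmissibleCDF f F) (hG : IsAdmissibleCDF g G)
    (hGinv : RightInverse Ginv G) (α x : ℝ) :
    Ginv (F (x + 1) - α) = Ginv (F x - α) + 1 := by
  rw [hF.add_one, add_sub_right_comm, hG.inv_add_one hGinv]

theorem hasDerivAt_lift (hF : IsAdmissibleCDF f F) (hG : IsAdmissibleCDF g G)
    (hGinv : RightInverse Ginv G) (α x : ℝ) :
    HasDerivAt (fun x => Ginv (F x - α)) ((g (Ginv (F x - α)))⁻¹ * f x) x :=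
  (hG.hasDerivAt_inv hGinv _).comp x ((hF.hasDerivAt x).sub_const α)

theorem continuous_deriv_lift (hF : IsAdmissibleCDF f F) (hG : IsAdmissibleCDF g G)
    (hGinv : RightInverse Ginv G) (α : ℝ) :
    Continuous fun x => (g (Ginv (F x - α)))⁻¹ * f x :=
  ((hG.continuous.comp (continuous_lift hF hG hGinv α)).inv₀ fun _ => (hG.pos _).ne').mul
    hF.continuous

theorem integral_mul_sub_lift_sq (hF : IsAdmissibleCDF f F) (hG : IsAdmissibleCDF g G)
    (hFinv : LeftInverse Finv F) (hFinv' : RightInverse Finv F) (hGinv : RightInverse Ginv G)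
    (α : ℝ) :
    ∫ x in (0:ℝ)..1, f x * (x - Ginv (F x - α)) ^ 2
      = ∫ t in (0:ℝ)..1, (Finv t - Ginv (t - α)) ^ 2 := by
  rw [← hF.integral_comp_mul (k := fun t => (Finv t - Ginv (t - α)) ^ 2) (by
    have := hF.continuous_inv hFinv'
    have := hG.continuous_inv hGinv
    fun_prop)]
  exact integral_congr fun x _ => by simp only [hFinv x]; ring

theorem hasDerivAt_integral_sub_sq (hG : IsAdmissibleCDF g G) (hGinv : RightInverse Ginv G)
    (hFc : Continuous Finv) (α : ℝ) :
    HasDerivAt (fun β => ∫ t in (0:ℝ)..1, (Finv t - Ginv (t - β)) ^ 2)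
      (∫ t in (0:ℝ)..1, 2 * (Finv t - Ginv (t - α)) * (g (Ginv (t - α)))⁻¹) α := by
  have hGc := hG.continuous_inv hGinv
  refine hasDerivAt_intervalIntegral_of_continuous_deriv
    (F := fun β t => (Finv t - Ginv (t - β)) ^ 2)
    (F' := fun β t => 2 * (Finv t - Ginv (t - β)) * (g (Ginv (t - β)))⁻¹)
    (by fun_prop) ?_ fun β t => ?_
  · exact (continuous_const.mul (by fun_prop)).mul
      ((hG.continuous.comp (by fun_prop)).inv₀ fun _ => (hG.pos _).ne')
  · exact (((hG.hasDerivAt_inv hGinv _).comp β ((hasDerivAt_id β).const_sub t)).const_sub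
      (Finv t) |>.pow 2).congr_deriv (by simp)

theorem integral_sub_lift_eq_zero_of_forall_le (hF : IsAdmissibleCDF f F)
    (hG : IsAdmissibleCDF g G) (hFinv : LeftInverse Finv F) (hFinv' : RightInverse Finv F)
    (hGinv : RightInverse Ginv G) {α : ℝ}
    (hmin : ∀ β, ∫ t in (0:ℝ)..1, (Finv t - Ginv (t - α)) ^ 2
      ≤ ∫ t in (0:ℝ)..1, (Finv t - Ginv (t - β)) ^ 2) :
    ∫ x in (0:ℝ)..1, (x - Ginv (F x - α)) = 0 := by
  have hFc := hF.continuous_inv hFinv'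
  have hGc := hG.continuous_inv hGinv
  have h0 := IsLocalMin.hasDerivAt_eq_zero (.of_forall hmin)
    (hasDerivAt_integral_sub_sq hG hGinv hFc α)
  rw [← hF.integral_comp_mul
    (k := fun t => 2 * (Finv t - Ginv (t - α)) * (g (Ginv (t - α)))⁻¹)
    ((continuous_const.mul (by fun_prop)).mul
      ((hG.continuous.comp (by fun_prop)).inv₀ fun _ => (hG.pos _).ne'))] at h0
  refine integral_sub_eq_zero_of_integral_sub_mul_deriv_eq_zero (hasDerivAt_lift hF hG hGinv α)
    (continuous_deriv_lift hF hG hGinv α) (by simpa using lift_add_one hF hG hGinv α 0) ?_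
  rw [← mul_right_inj' (two_ne_zero (α := ℝ)), mul_zero,
    ← intervalIntegral.integral_const_mul]
  refine (integral_congr fun x _ => ?_).trans h0
  simp only [hFinv x]
  ring

end Lift

theorem periodic_intervalIntegral_of_integral_eq_zero {k : ℝ → ℝ} (hk : Continuous k)
    (hkp : Periodic k 1) (h : ∫ x in (0:ℝ)..1, k x = 0) :
    Periodic (fun x => ∫ s in (0:ℝ)..x, k s) 1 := fun x => by
  simpa [h] using hkp.intervalIntegral_add_eq_add 0 x fun _ _ => hk.intervalIntegrable _ _

/-- The derivative of `z ↦ (z - u x)² - Φ z` is `2 (u z - u x)`, which changes sign at `x`. -/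
theorem sq_sub_sub_le_of_hasDerivAt {u Φ : ℝ → ℝ} (hu : Monotone u)
    (hΦ : ∀ x, HasDerivAt Φ (2 * (x - u x)) x) (x z : ℝ) :
    (x - u x) ^ 2 - Φ x ≤ (z - u x) ^ 2 - Φ z := by
  set ρ : ℝ → ℝ := fun w => (w - u x) ^ 2 - Φ w
  have hρ : ∀ w, HasDerivAt ρ (2 * (u w - u x)) w := fun w =>
    ((((hasDerivAt_id w).sub_const (u x)).pow 2).sub (hΦ w)).congr_deriv (by simp; ring)
  have hρc : Continuous ρ := continuous_iff_continuousAt.2 fun w => (hρ w).continuousAt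
  rcases le_total x z with hxz | hzx
  · refine monotoneOn_of_hasDerivWithinAt_nonneg (convex_Ici x) hρc.continuousOn
      (fun w _ => (hρ w).hasDerivWithinAt) (fun w hw => ?_) self_mem_Ici hxz hxz
    rw [interior_Ici] at hw
    linarith [hu (le_of_lt hw)]
  · refine antitoneOn_of_hasDerivWithinAt_nonpos (convex_Iic x) hρc.continuousOn
      (fun w _ => (hρ w).hasDerivWithinAt) (fun w hw => ?_) hzx self_mem_Iic hzx
    rw [interior_Iic] at hw
    linarith [hu (le_of_lt hw)]

namespace AddCircle

variable {p : ℝ}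

theorem dist_coe_sq_le (x y : ℝ) : dist (x : AddCircle p) y ^ 2 ≤ (x - y) ^ 2 := by
  rw [← sq_abs (x - y), dist_eq_norm, ← QuotientAddGroup.mk_sub, ← Real.norm_eq_abs]
  exact pow_le_pow_left₀ (norm_nonneg _) QuotientAddGroup.norm_mk_le_norm 2

theorem exists_coe_eq_dist_eq (x y : ℝ) :
    ∃ z : ℝ, (z : AddCircle p) = x ∧ dist (x : AddCircle p) y = |z - y| := by
  refine ⟨x - round (p⁻¹ * (x - y)) * p, ?_, ?_⟩
  · rw [QuotientAddGroup.mk_sub, sub_eq_self, AddCircle.coe_eq_zero_iff]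
    exact ⟨round (p⁻¹ * (x - y)), zsmul_eq_mul _ _⟩
  · rw [dist_eq_norm, ← QuotientAddGroup.mk_sub, AddCircle.norm_eq]
    ring_nf

end AddCircle

section CTransform

variable {X : Type*} [PseudoMetricSpace X] {φ : X → ℝ}

noncomputable def cTransform (φ : X → ℝ) (y : X) : ℝ := ⨅ x, dist x y ^ 2 - φ x

theorem bddBelow_range_dist_sq_sub (hφ : BddAbove (range φ)) (y : X) :
    BddBelow (range fun x => dist x y ^ 2 - φ x) := by
  obtain ⟨C, hC⟩ := hφ
  refine ⟨-C, forall_mem_range.2 fun x => ?_⟩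
  linarith [hC (mem_range_self x), sq_nonneg (dist x y)]

theorem cTransform_le (hφ : BddAbove (range φ)) (x y : X) :
    cTransform φ y ≤ dist x y ^ 2 - φ x :=
  ciInf_le (bddBelow_range_dist_sq_sub hφ y) x

theorem add_cTransform_le (hφ : BddAbove (range φ)) (x y : X) :
    φ x + cTransform φ y ≤ dist x y ^ 2 := by
  linarith [cTransform_le hφ x y]

theorem continuous_cTransform [CompactSpace X] (hφ : BddAbove (range φ)) :
    Continuous (cTransform φ) := by
  set D := Metric.diam (univ : Set X)
  have hD : ∀ x y : X, dist x y ≤ D := fun x y =>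
    Metric.dist_le_diam_of_mem isCompact_univ.isBounded trivial trivial
  refine (LipschitzWith.of_le_add_mul' (2 * D) fun y' y => ?_).continuous
  have : Nonempty X := ⟨y⟩
  rw [← sub_le_iff_le_add]
  refine le_ciInf fun x => ?_
  have hsq : dist x y' ^ 2 ≤ dist x y ^ 2 + 2 * D * dist y' y := by
    nlinarith [dist_triangle x y y', dist_comm y y', hD x y, hD x y', dist_nonneg (x := x) (y := y),
      dist_nonneg (x := x) (y := y'), dist_nonneg (x := y') (y := y)]
  linarith [cTransform_le hφ x y']

end CTransform

/-- `Φ x = ∫₀ˣ 2 (s - u s) ds` is periodic because the displacement has mean zero, and `x`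
minimises `z ↦ (z - u x)² - Φ z` over all lifts `z`, so `↑x` attains the infimum defining the
transform at `↑(u x)`. -/
theorem exists_potential_of_integral_sub_eq_zero {u : ℝ → ℝ} (hu : Monotone u)
    (hu_cont : Continuous u) (hu_add : ∀ x, u (x + 1) = u x + 1)
    (hmean : ∫ x in (0:ℝ)..1, (x - u x) = 0) :
    ∃ φ : AddCircle (1:ℝ) → ℝ, Continuous φ ∧ ∀ x : ℝ,
      dist (x : AddCircle (1:ℝ)) (u x) ^ 2 = (x - u x) ^ 2 ∧
      φ x + cTransform φ (u x) = (x - u x) ^ 2 := by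
  set Φ : ℝ → ℝ := fun x => ∫ s in (0:ℝ)..x, 2 * (s - u s)
  have hk : Continuous fun s => 2 * (s - u s) := by fun_prop
  have hΦ : ∀ x, HasDerivAt Φ (2 * (x - u x)) x := fun x =>
    (hk.integral_hasStrictDerivAt 0 x).hasDerivAt
  have hΦp : Periodic Φ 1 := periodic_intervalIntegral_of_integral_eq_zero hk
    (fun s => by simp only [hu_add]; ring)
    (by rw [intervalIntegral.integral_const_mul, hmean, mul_zero])
  set φ : AddCircle (1:ℝ) → ℝ := hΦp.lift
  have hφ : Continuous φ :=
    (continuous_iff_continuousAt.2 fun x => (hΦ x).continuousAt).quotient_liftOn' _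
  have hφb : BddAbove (range φ) := (isCompact_range hφ).bddAbove
  refine ⟨φ, hφ, fun x => ?_⟩
  have hψ : cTransform φ (u x) = (x - u x) ^ 2 - Φ x := by
    refine le_antisymm ((cTransform_le hφb x _).trans ?_) (le_ciInf fun w => ?_)
    · exact sub_le_sub_right (AddCircle.dist_coe_sq_le x (u x)) _
    · induction w using QuotientAddGroup.induction_on with | H w =>
      obtain ⟨z, hz, hdist⟩ := AddCircle.exists_coe_eq_dist_eq (p := 1) w (u x)
      rw [hdist, ← hz, sq_abs]
      exact sq_sub_sub_le_of_hasDerivAt hu hΦ x z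
  have hφx : φ x = Φ x := rfl
  refine ⟨le_antisymm ?_ ?_, by rw [hψ, hφx]; ring⟩
  · exact AddCircle.dist_coe_sq_le x (u x)
  · have := add_cTransform_le hφb x (u x)
    rwa [hψ, hφx, add_sub_cancel] at this

theorem AddCircle.map_coe_withDensity_Ico {ρ : ℝ → ℝ≥0∞} (hρ : Periodic ρ 1)
    (hρm : Measurable ρ) (a : ℝ) :
    Measure.map ((↑) : ℝ → AddCircle (1:ℝ))
        ((volume.restrict (Ico a (a + 1))).withDensity ρ)
      = volume.withDensity hρ.lift := by
  have hm : Measurable hρ.lift := measurable_from_quotient.2 hρm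
  ext B hB
  rw [Measure.map_apply AddCircle.measurable_mk' hB,
    withDensity_apply _ (AddCircle.measurable_mk' hB), withDensity_apply _ hB,
    ← lintegral_indicator (AddCircle.measurable_mk' hB),
    ← lintegral_indicator hB, ← AddCircle.lintegral_preimage 1 a,
    Measure.restrict_congr_set Ico_ae_eq_Ioc]
  rfl

theorem map_withDensity_abs_deriv_mul {s : Set ℝ} {u u' : ℝ → ℝ} (hs : MeasurableSet s)
    (hu : Measurable u) (hu' : ∀ x ∈ s, HasDerivWithinAt u (u' x) s x) (hinj : InjOn u s)
    (ρ : ℝ → ℝ≥0∞) :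
    Measure.map u ((volume.restrict s).withDensity fun x => ENNReal.ofReal |u' x| * ρ (u x))
      = (volume.restrict (u '' s)).withDensity ρ := by
  ext B hB
  rw [Measure.map_apply hu hB, withDensity_apply _ (hu hB), withDensity_apply _ hB,
    ← lintegral_indicator (hu hB), ← lintegral_indicator hB,
    lintegral_image_eq_lintegral_abs_deriv_mul hs hu' hinj]
  congr with x
  by_cases hx : u x ∈ B <;> simp [indicator, hx]

noncomputable def circleMeasure (f : ℝ → ℝ) : Measure (AddCircle (1:ℝ)) :=
  Measure.map (↑) ((volume.restrict (Ico (0:ℝ) 1)).withDensity fun t => ENNReal.ofReal (f t))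

theorem isFiniteMeasure_circleMeasure {f : ℝ → ℝ} (hf : IntegrableOn f (Ico 0 1)) :
    IsFiniteMeasure (circleMeasure f) :=
  have := isFiniteMeasure_withDensity_ofReal hf.2
  Measure.isFiniteMeasure_map _ _

theorem integral_circleMeasure {f : ℝ → ℝ} (hf0 : ∀ x, 0 ≤ f x) (hfm : Measurable f)
    {h : AddCircle (1:ℝ) → ℝ} (hh : AEStronglyMeasurable h (circleMeasure f)) :
    ∫ z, h z ∂circleMeasure f = ∫ x in (0:ℝ)..1, f x * h x := by
  rw [circleMeasure, integral_map AddCircle.measurable_mk'.aemeasurable hh,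
    integral_withDensity_eq_integral_toReal_smul (by fun_prop)
      (ae_of_all _ fun _ => ENNReal.ofReal_lt_top),
    intervalIntegral.integral_of_le zero_le_one, integral_Ico_eq_integral_Ioo,
    ← integral_Ioc_eq_integral_Ioo]
  simp [ENNReal.toReal_ofReal (hf0 _)]

theorem map_circleMeasure_of_lift {f g u : ℝ → ℝ}
    {T : AddCircle (1:ℝ) → AddCircle (1:ℝ)} (hT : Measurable T) (hTu : ∀ x : ℝ, T x = u x)
    (hf0 : ∀ x, 0 ≤ f x) (hgc : Continuous g) (hg0 : ∀ x, 0 < g x) (hgp : Periodic g 1)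
    (hu : StrictMono u) (hu_cont : Continuous u)
    (hu_add : ∀ x, u (x + 1) = u x + 1) (hu' : ∀ x, HasDerivAt u ((g (u x))⁻¹ * f x) x) :
    (circleMeasure f).map T = circleMeasure g := by
  have hρ : Periodic (fun x => ENNReal.ofReal (g x)) 1 := fun x => by simp only [hgp x]
  have hρm : Measurable fun x => ENNReal.ofReal (g x) := by fun_prop
  have hdens : (fun x => ENNReal.ofReal (f x))
      = fun x => ENNReal.ofReal |(g (u x))⁻¹ * f x| * ENNReal.ofReal (g (u x)) := by
    funext x
    have hg := hg0 (u x)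
    rw [abs_of_nonneg (mul_nonneg (inv_nonneg.2 hg.le) (hf0 x)), ← ENNReal.ofReal_mul
      (mul_nonneg (inv_nonneg.2 hg.le) (hf0 x)), mul_comm, ← mul_assoc, mul_inv_cancel₀ hg.ne',
      one_mul]
  rw [circleMeasure, circleMeasure, Measure.map_map hT AddCircle.measurable_mk',
    show T ∘ (↑) = (↑) ∘ u from funext hTu,
    ← Measure.map_map AddCircle.measurable_mk' hu_cont.measurable, hdens,
    map_withDensity_abs_deriv_mul measurableSet_Ico hu_cont.measurable
      (fun x _ => (hu' x).hasDerivWithinAt) hu.injective.injOn fun y => ENNReal.ofReal (g y),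
    hu_cont.image_Ico_of_strictMono hu, show u 1 = u 0 + 1 by simpa using hu_add 0,
    AddCircle.map_coe_withDensity_Ico hρ hρm]
  simpa using (AddCircle.map_coe_withDensity_Ico hρ hρm 0).symm

theorem integral_cost_le_of_potentials {X Y : Type*} [MeasurableSpace X] [MeasurableSpace Y]
    {μ : Measure X} {c : X → Y → ℝ} {φ : X → ℝ} {ψ : Y → ℝ} {T S : X → Y}
    (hle : ∀ x y, φ x + ψ y ≤ c x y) (heq : ∀ x, φ x + ψ (T x) = c x (T x))
    (hφ : Integrable φ μ) (hψ : Integrable ψ (μ.map T)) (hT : AEMeasurable T μ)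
    (hS : AEMeasurable S μ) (hST : μ.map S = μ.map T) (hc : Integrable (fun x => c x (S x)) μ) :
    ∫ x, c x (T x) ∂μ ≤ ∫ x, c x (S x) ∂μ := by
  have hψS : Integrable ψ (μ.map S) := hST ▸ hψ
  have hψT' : Integrable (fun x => ψ (T x)) μ := hψ.comp_aemeasurable hT
  have hψS' : Integrable (fun x => ψ (S x)) μ := hψS.comp_aemeasurable hS
  calc ∫ x, c x (T x) ∂μ = ∫ x, φ x ∂μ + ∫ y, ψ y ∂μ.map T := by
        rw [integral_map hT hψ.1, ← integral_add hφ hψT']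
        simp_rw [heq]
    _ = ∫ x, φ x + ψ (S x) ∂μ := by
        rw [← hST, integral_map hS hψS.1, integral_add hφ hψS']
    _ ≤ ∫ x, c x (S x) ∂μ := integral_mono (hφ.add hψS') hc fun x => hle x (S x)

theorem Continuous.integrable_of_compactSpace {X : Type*} [TopologicalSpace X] [CompactSpace X]
    [MeasurableSpace X] [OpensMeasurableSpace X] {μ : Measure X} [IsFiniteMeasure μ]
    {h : X → ℝ} (hh : Continuous h) : Integrable h μ := by
  obtain ⟨C, hC⟩ := (isCompact_range hh).isBounded.exists_norm_le
  exact .of_bound hh.aestronglyMeasurable_of_compactSpace C (ae_of_all _ fun x => hC _ ⟨x, rfl⟩)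

theorem integrable_dist_sq_comp {X : Type*} [MetricSpace X] [CompactSpace X] [MeasurableSpace X]
    [BorelSpace X] {μ : Measure X} [IsFiniteMeasure μ] {S : X → X} (hS : Measurable S) :
    Integrable (fun x => dist x (S x) ^ 2) μ := by
  refine .of_bound ((measurable_id.dist hS).pow_const 2).aestronglyMeasurable
    (Metric.diam (univ : Set X) ^ 2) (ae_of_all _ fun x => ?_)
  rw [Real.norm_of_nonneg (by positivity)]
  exact pow_le_pow_left₀ dist_nonneg
    (Metric.dist_le_diam_of_mem isCompact_univ.isBounded trivial trivial) 2

theorem optimal_map_on_circle_from_minimizer_general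
    (f g F G Finv Ginv : ℝ → ℝ) (η : ℝ) (hη : 0 < η)
    (hfc : Continuous f) (hgc : Continuous g)
    (hfp : Function.Periodic f 1) (hgp : Function.Periodic g 1)
    (hfl : ∀ t, η ≤ f t) (hgl : ∀ t, η ≤ g t)
    (hfm : (∫ t in (0:ℝ)..1, f t) = 1) (hgm : (∫ t in (0:ℝ)..1, g t) = 1)
    (hF : ∀ t, F t = ∫ τ in (0:ℝ)..t, f τ) (hG : ∀ t, G t = ∫ τ in (0:ℝ)..t, g τ)
    (hF₁ : Function.LeftInverse Finv F) (hF₂ : Function.RightInverse Finv F)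
    (hG₂ : Function.RightInverse Ginv G)
    (μ ν : Measure (AddCircle (1:ℝ)))
    (hμ : μ = Measure.map (fun t : ℝ => (t : AddCircle (1:ℝ)))
      ((volume.restrict (Set.Ico (0:ℝ) 1)).withDensity fun t => ENNReal.ofReal (f t)))
    (hν : ν = Measure.map (fun t : ℝ => (t : AddCircle (1:ℝ)))
      ((volume.restrict (Set.Ico (0:ℝ) 1)).withDensity fun t => ENNReal.ofReal (g t)))
    (I : ℝ → ℝ) (hI : ∀ α, I α = ∫ t in (0:ℝ)..1, (Finv t - Ginv (t - α)) ^ 2)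
    (αs : ℝ) (hmin : ∀ α : ℝ, I αs ≤ I α)
    (T : AddCircle (1:ℝ) → AddCircle (1:ℝ))
    (hT : ∀ t : ℝ, T (t : AddCircle (1:ℝ)) = ((Ginv (F t - αs) : ℝ) : AddCircle (1:ℝ))) :
    Measure.map T μ = ν ∧
      ((∫ x, dist x (T x) ^ 2 ∂μ) = ⨅ α : ℝ, I α) ∧
      ∀ S : AddCircle (1:ℝ) → AddCircle (1:ℝ), Measurable S → Measure.map S μ = ν →
        (∫ x, dist x (T x) ^ 2 ∂μ) ≤ ∫ x, dist x (S x) ^ 2 ∂μ := by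
  obtain rfl : μ = circleMeasure f := hμ
  obtain rfl : ν = circleMeasure g := hν
  have hFa : IsAdmissibleCDF f F := ⟨hfc, fun t => hη.trans_le (hfl t), hfp, hfm, hF⟩
  have hGa : IsAdmissibleCDF g G := ⟨hgc, fun t => hη.trans_le (hgl t), hgp, hgm, hG⟩
  have hu := strictMono_lift hFa hGa hG₂ αs
  have hu_cont := continuous_lift hFa hGa hG₂ αs
  have hmean := integral_sub_lift_eq_zero_of_forall_le hFa hGa hF₁ hF₂ hG₂
    fun β => by simpa only [hI] using hmin β
  obtain ⟨φ, hφ, hφT⟩ := exists_potential_of_integral_sub_eq_zero hu.monotone hu_cont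
    (lift_add_one hFa hGa hG₂ αs) hmean
  have hTu : T ∘ (↑) = fun x => ((Ginv (F x - αs) : ℝ) : AddCircle (1:ℝ)) := funext hT
  have hTc : Continuous T := (QuotientAddGroup.isQuotientMap_mk _).continuous_iff.2
    (hTu ▸ (AddCircle.continuous_mk' 1).comp hu_cont)
  have : IsFiniteMeasure (circleMeasure f) :=
    isFiniteMeasure_circleMeasure (hfc.integrableOn_Icc.mono_set Ico_subset_Icc_self)
  have hmap : (circleMeasure f).map T = circleMeasure g :=
    map_circleMeasure_of_lift hTc.measurable hT (fun x => (hFa.pos x).le) hgc hGa.pos hgp hu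
      hu_cont (lift_add_one hFa hGa hG₂ αs) (hasDerivAt_lift hFa hGa hG₂ αs)
  have hcost : ∫ z, dist z (T z) ^ 2 ∂circleMeasure f = I αs := by
    rw [integral_circleMeasure (fun x => (hFa.pos x).le) hfc.measurable (by fun_prop), hI,
      ← integral_mul_sub_lift_sq hFa hGa hF₁ hF₂ hG₂]
    exact integral_congr fun x _ => by rw [hT, (hφT x).1]
  have hφb : BddAbove (range φ) := (isCompact_range hφ).bddAbove
  have hinf : I αs = ⨅ α, I α :=
    le_antisymm (le_ciInf hmin) (ciInf_le ⟨I αs, forall_mem_range.2 hmin⟩ αs)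
  refine ⟨hmap, hcost.trans hinf, fun S hS hSμ =>
    integral_cost_le_of_potentials (add_cTransform_le hφb) (fun z => ?_)
      hφ.integrable_of_compactSpace (continuous_cTransform hφb).integrable_of_compactSpace
      hTc.aemeasurable hS.aemeasurable (hSμ.trans hmap.symm) (integrable_dist_sq_comp hS)⟩
  induction z using QuotientAddGroup.induction_on with | H x => rw [hT, (hφT x).1, (hφT x).2]

/-- If α* minimizes I(α) = ∫₀¹ (F⁻¹(t) − G⁻¹(t − α))² dt over ℝ, then the
map of the circle induced by t ↦ G⁻¹(F(t) − α*) pushes μ forward to ν, realizes the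
infimum of I as its transport cost, and is an optimal transport map for the cost d². -/
theorem optimal_map_on_circle_from_minimizer
    (f g F G Finv Ginv : ℝ → ℝ) (η : ℝ) (hη : 0 < η)
    (hfc : Continuous f) (hgc : Continuous g)
    (hfp : Function.Periodic f 1) (hgp : Function.Periodic g 1)
    (hfl : ∀ t, η ≤ f t) (hgl : ∀ t, η ≤ g t)
    (hfm : (∫ t in (0:ℝ)..1, f t) = 1) (hgm : (∫ t in (0:ℝ)..1, g t) = 1)
    (hF : ∀ t, F t = ∫ τ in (0:ℝ)..t, f τ) (hG : ∀ t, G t = ∫ τ in (0:ℝ)..t, g τ)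
    (hF₁ : Function.LeftInverse Finv F) (hF₂ : Function.RightInverse Finv F)
    (hG₁ : Function.LeftInverse Ginv G) (hG₂ : Function.RightInverse Ginv G)
    (μ ν : Measure (AddCircle (1:ℝ)))
    (hμ : μ = Measure.map (fun t : ℝ => (t : AddCircle (1:ℝ)))
      ((volume.restrict (Set.Ico (0:ℝ) 1)).withDensity fun t => ENNReal.ofReal (f t)))
    (hν : ν = Measure.map (fun t : ℝ => (t : AddCircle (1:ℝ)))
      ((volume.restrict (Set.Ico (0:ℝ) 1)).withDensity fun t => ENNReal.ofReal (g t)))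
    (I : ℝ → ℝ) (hI : ∀ α, I α = ∫ t in (0:ℝ)..1, (Finv t - Ginv (t - α)) ^ 2)
    (αs : ℝ) (hmin : ∀ α : ℝ, I αs ≤ I α)
    (T : AddCircle (1:ℝ) → AddCircle (1:ℝ))
    (hT : ∀ t : ℝ, T (t : AddCircle (1:ℝ)) = ((Ginv (F t - αs) : ℝ) : AddCircle (1:ℝ))) :
    Measure.map T μ = ν ∧
      ((∫ x, dist x (T x) ^ 2 ∂μ) = ⨅ α : ℝ, I α) ∧
      ∀ S : AddCircle (1:ℝ) → AddCircle (1:ℝ), Measurable S → Measure.map S μ = ν →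
        (∫ x, dist x (T x) ^ 2 ∂μ) ≤ ∫ x, dist x (S x) ^ 2 ∂μ :=
  optimal_map_on_circle_from_minimizer_general f g F G Finv Ginv η hη hfc hgc hfp hgp hfl hgl hfm
    hgm hF hG hF₁ hF₂ hG₂ μ ν hμ hν I hI αs hmin T hT
end

section
/- Let f, g be admissible circle densities with cumulative distribution functions F, G and corresponding measures μ, ν on S¹ = ℝ/ℤ. For every α ∈ ℝ, the map T_α : S¹ → S¹ induced by t ↦ G⁻¹(F(t) − α) (taken modulo 1) satisfies (T_α)_*μ = ν, and its transport cost is bounded by the line cost: ∫₀¹ d(t mod 1, T_α(t))² f(t) dt ≤ ∫₀¹ (F⁻¹(t) − G⁻¹(t − α))² dt. -/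
/-!
Substituting `s = F t` turns `μ` into the image of Lebesgue measure on `[0, 1)` under `F⁻¹ mod 1`,
`ν` into its image under `G⁻¹ mod 1`, and `T_α ∘ F⁻¹` into `s ↦ G⁻¹ (s - α) mod 1`. Periodicity
of `g` gives `G⁻¹ (s + 1) = G⁻¹ s + 1`, so `s ↦ G⁻¹ s mod 1` is `1`-periodic and factors through
the circle, where Lebesgue measure is invariant under the shift by `α`. The same substitution
turns the cost into `∫₀¹ d(F⁻¹ s, G⁻¹ (s - α))² ds`, and the circle distance is at most the
distance of any two representatives.
-/

open MeasureTheory Set Function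

namespace AddCircle

variable {T : ℝ}

lemma dist_coe_le (x y : ℝ) : dist (x : AddCircle T) y ≤ |x - y| := by
  rw [dist_eq_norm, ← coe_sub, ← Real.norm_eq_abs]
  exact QuotientAddGroup.norm_mk_le_norm

variable [Fact (0 < T)]

lemma map_coe_restrict_Ico (a : ℝ) :
    Measure.map ((↑) : ℝ → AddCircle T) (volume.restrict (Ico a (a + T))) = volume := by
  rw [Measure.restrict_congr_set Ico_ae_eq_Ioc]
  exact (AddCircle.measurePreserving_mk T a).map_eq

end AddCircle

lemma Function.Periodic.map_comp_sub_restrict_Ico {X : Type*} [MeasurableSpace X] {T : ℝ}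
    [Fact (0 < T)] {φ : ℝ → X} (hφ : Periodic φ T) (hφm : Measurable φ) (a α : ℝ) :
    Measure.map (fun t => φ (t - α)) (volume.restrict (Ico a (a + T))) =
      Measure.map φ (volume.restrict (Ico a (a + T))) := by
  have hlift : Measurable hφ.lift := QuotientAddGroup.measurable_from_quotient.2 hφm
  have hshift : (fun t => φ (t - α)) =
      (hφ.lift ∘ (· + ((-α : ℝ) : AddCircle T))) ∘ ((↑) : ℝ → AddCircle T) := by
    funext t
    simp only [comp_apply, ← AddCircle.coe_add, hφ.lift_coe, sub_eq_add_neg]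
  calc Measure.map (fun t => φ (t - α)) (volume.restrict (Ico a (a + T)))
      = Measure.map hφ.lift volume := by
        rw [hshift, ← Measure.map_map (hlift.comp (measurable_add_const _)) AddCircle.measurable_mk',
          ← Measure.map_map hlift (measurable_add_const _), AddCircle.map_coe_restrict_Ico,
          map_add_right_eq_self]
    _ = Measure.map φ (volume.restrict (Ico a (a + T))) := by
        rw [← AddCircle.map_coe_restrict_Ico a, Measure.map_map hlift AddCircle.measurable_mk']
        rfl

section Primitive

variable {f F Finv : ℝ → ℝ}

lemma sub_eq_integral_of_primitive (hfc : Continuous f)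
    (hF : ∀ t, F t = ∫ τ in (0:ℝ)..t, f τ) (a b : ℝ) : F b - F a = ∫ τ in a..b, f τ := by
  rw [hF, hF]
  exact intervalIntegral.integral_interval_sub_left (hfc.intervalIntegrable _ _)
    (hfc.intervalIntegrable _ _)

lemma hasDerivAt_of_primitive (hfc : Continuous f)
    (hF : ∀ t, F t = ∫ τ in (0:ℝ)..t, f τ) (x : ℝ) : HasDerivAt F (f x) x := by
  rw [show F = fun t => ∫ τ in (0:ℝ)..t, f τ from funext hF]
  exact (hfc.integral_hasStrictDerivAt 0 x).hasDerivAt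

lemma add_one_of_primitive (hfc : Continuous f) (hfp : Periodic f 1)
    (hfm : ∫ t in (0:ℝ)..1, f t = 1) (hF : ∀ t, F t = ∫ τ in (0:ℝ)..t, f τ) (t : ℝ) :
    F (t + 1) = F t + 1 := by
  have hshift : ∫ τ in t..t + 1, f τ = ∫ τ in (0:ℝ)..0 + 1, f τ :=
    hfp.intervalIntegral_add_eq t 0
  rw [zero_add, hfm] at hshift
  linarith [sub_eq_integral_of_primitive hfc hF t (t + 1)]

lemma add_one_of_leftInverse_of_rightInverse (hF1 : ∀ t, F (t + 1) = F t + 1)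
    (hF₁ : LeftInverse Finv F) (hF₂ : RightInverse Finv F) (t : ℝ) :
    Finv (t + 1) = Finv t + 1 := by
  rw [← hF₁ (Finv t + 1), hF1, hF₂]

lemma StrictMono.continuous_of_rightInverse (hFm : StrictMono F) (hF₂ : RightInverse Finv F) :
    Continuous Finv :=
  (hFm.orderIsoOfRightInverse F Finv hF₂).symm.continuous

lemma StrictMono.preimage_Ico_of_rightInverse (hFm : StrictMono F) (hF₂ : RightInverse Finv F)
    (a b : ℝ) : Finv ⁻¹' Ico a b = Ico (F a) (F b) :=
  (hFm.orderIsoOfRightInverse F Finv hF₂).symm.preimage_Ico a b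

lemma StrictMono.preimage_Ioc_of_rightInverse (hFm : StrictMono F) (hF₂ : RightInverse Finv F)
    (a b : ℝ) : Finv ⁻¹' Ioc a b = Ioc (F a) (F b) :=
  (hFm.orderIsoOfRightInverse F Finv hF₂).symm.preimage_Ioc a b

lemma withDensity_eq_map_of_rightInverse (hfc : Continuous f) (hf0 : ∀ t, 0 ≤ f t)
    (hF : ∀ t, F t = ∫ τ in (0:ℝ)..t, f τ) (hFm : StrictMono F) (hF₂ : RightInverse Finv F) :
    volume.withDensity (fun t => ENNReal.ofReal (f t)) = Measure.map Finv volume := by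
  have hIoc : ∀ a b, a ≤ b → volume.withDensity (fun t => ENNReal.ofReal (f t)) (Ioc a b) =
      ENNReal.ofReal (F b - F a) := by
    intro a b hab
    rw [withDensity_apply _ measurableSet_Ioc, ← ofReal_integral_eq_lintegral_ofReal
      hfc.integrableOn_Ioc (.of_forall hf0), ← intervalIntegral.integral_of_le hab,
      sub_eq_integral_of_primitive hfc hF]
  refine Measure.ext_of_Ioc' _ _ (fun a b hab => ?_) (fun a b hab => ?_)
  · exact hIoc a b hab.le ▸ ENNReal.ofReal_ne_top
  · rw [hIoc a b hab.le, Measure.map_apply (hFm.continuous_of_rightInverse hF₂).measurable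
      measurableSet_Ioc, hFm.preimage_Ioc_of_rightInverse hF₂, Real.volume_Ioc]

lemma map_withDensity_restrict_Ico {X : Type*} [MeasurableSpace X] {φ : ℝ → X}
    (hφ : Measurable φ) (hfc : Continuous f) (hf0 : ∀ t, 0 ≤ f t)
    (hF : ∀ t, F t = ∫ τ in (0:ℝ)..t, f τ) (hFm : StrictMono F) (hF₂ : RightInverse Finv F)
    (a b : ℝ) :
    Measure.map φ ((volume.restrict (Ico a b)).withDensity (fun t => ENNReal.ofReal (f t))) =
      Measure.map (φ ∘ Finv) (volume.restrict (Ico (F a) (F b))) := by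
  have hFinvm := (hFm.continuous_of_rightInverse hF₂).measurable
  rw [← restrict_withDensity measurableSet_Ico,
    withDensity_eq_map_of_rightInverse hfc hf0 hF hFm hF₂,
    Measure.restrict_map hFinvm measurableSet_Ico, hFm.preimage_Ico_of_rightInverse hF₂,
    Measure.map_map hφ hFinvm]

lemma integral_dist_coe_sq_mul_le {T a b : ℝ} (hab : a ≤ b) (hfc : Continuous f)
    (hF : ∀ t, F t = ∫ τ in (0:ℝ)..t, f τ) (hFm : StrictMono F) (hF₁ : LeftInverse Finv F)
    (hF₂ : RightInverse Finv F) {ψ : ℝ → ℝ} (hψ : Continuous ψ) :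
    ∫ t in a..b, dist (t : AddCircle T) (ψ (F t)) ^ 2 * f t ≤
      ∫ s in F a..F b, (Finv s - ψ s) ^ 2 := by
  have hFinvc := hFm.continuous_of_rightInverse hF₂
  set c : ℝ → ℝ := fun s => dist (Finv s : AddCircle T) (ψ s) ^ 2
  have hc : Continuous c := by fun_prop
  calc ∫ t in a..b, dist (t : AddCircle T) (ψ (F t)) ^ 2 * f t
      = ∫ t in a..b, (c ∘ F) t * f t :=
        intervalIntegral.integral_congr fun t _ => by simp [c, hF₁ t]
    _ = ∫ s in F a..F b, c s :=
        intervalIntegral.integral_comp_mul_deriv (fun x _ => hasDerivAt_of_primitive hfc hF x)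
          hfc.continuousOn hc
    _ ≤ ∫ s in F a..F b, (Finv s - ψ s) ^ 2 :=
        intervalIntegral.integral_mono_on (hFm.monotone hab) (hc.intervalIntegrable _ _)
          (Continuous.intervalIntegrable (by fun_prop) _ _) fun s _ => by
            simpa only [sq_abs] using pow_le_pow_left₀ dist_nonneg (AddCircle.dist_coe_le _ _) 2

end Primitive

theorem circle_map_pushforward_and_cost_le_line_cost_general
    (f g F G Finv Ginv : ℝ → ℝ) (η : ℝ) (hη : 0 < η)
    (hfc : Continuous f) (hgc : Continuous g)
    (hgp : Function.Periodic g 1)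
    (hfl : ∀ t, η ≤ f t) (hgl : ∀ t, η ≤ g t)
    (hfm : (∫ t in (0:ℝ)..1, f t) = 1) (hgm : (∫ t in (0:ℝ)..1, g t) = 1)
    (hF : ∀ t, F t = ∫ τ in (0:ℝ)..t, f τ) (hG : ∀ t, G t = ∫ τ in (0:ℝ)..t, g τ)
    (hF₁ : Function.LeftInverse Finv F) (hF₂ : Function.RightInverse Finv F)
    (hG₁ : Function.LeftInverse Ginv G) (hG₂ : Function.RightInverse Ginv G)
    (μ ν : Measure (AddCircle (1:ℝ)))
    (hμ : μ = Measure.map (fun t : ℝ => (t : AddCircle (1:ℝ)))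
      ((volume.restrict (Set.Ico (0:ℝ) 1)).withDensity fun t => ENNReal.ofReal (f t)))
    (hν : ν = Measure.map (fun t : ℝ => (t : AddCircle (1:ℝ)))
      ((volume.restrict (Set.Ico (0:ℝ) 1)).withDensity fun t => ENNReal.ofReal (g t)))
    (α : ℝ) (T : AddCircle (1:ℝ) → AddCircle (1:ℝ))
    (hT : ∀ t : ℝ, T (t : AddCircle (1:ℝ)) = ((Ginv (F t - α) : ℝ) : AddCircle (1:ℝ))) :
    Measure.map T μ = ν ∧
      (∫ t in (0:ℝ)..1, dist ((t : ℝ) : AddCircle (1:ℝ)) (T ((t : ℝ) : AddCircle (1:ℝ))) ^ 2 * f t)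
        ≤ ∫ t in (0:ℝ)..1, (Finv t - Ginv (t - α)) ^ 2 := by
  have hFm := strictMono_of_hasDerivAt_pos (hasDerivAt_of_primitive hfc hF) fun t =>
    hη.trans_le (hfl t)
  have hGm := strictMono_of_hasDerivAt_pos (hasDerivAt_of_primitive hgc hG) fun t =>
    hη.trans_le (hgl t)
  have hFc : Continuous F := continuous_iff_continuousAt.2 fun x =>
    (hasDerivAt_of_primitive hfc hF x).continuousAt
  have hFinvc := hFm.continuous_of_rightInverse hF₂
  have hGinvc := hGm.continuous_of_rightInverse hG₂
  have hF01 : F 0 = 0 ∧ F 1 = 1 := ⟨by simp [hF], hF 1 ▸ hfm⟩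
  have hG01 : G 0 = 0 ∧ G 1 = 1 := ⟨by simp [hG], hG 1 ▸ hgm⟩
  have hGinv_periodic : Periodic (fun t => (Ginv t : AddCircle (1:ℝ))) 1 := fun t => by
    simp [add_one_of_leftInverse_of_rightInverse (add_one_of_primitive hgc hgp hgm hG) hG₁ hG₂]
  have hTm : Measurable T := QuotientAddGroup.measurable_from_quotient.2 <| by
    rw [show T ∘ (↑) = fun t : ℝ => ((Ginv (F t - α) : ℝ) : AddCircle (1:ℝ)) from funext hT]
    fun_prop
  have hTFinv : T ∘ (↑) ∘ Finv = fun t => (Ginv (t - α) : AddCircle (1:ℝ)) :=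
    funext fun t => by simp [hT, hF₂ t]
  refine ⟨?_, ?_⟩
  · rw [hμ, hν, map_withDensity_restrict_Ico AddCircle.measurable_mk' hfc
      (fun t => hη.le.trans (hfl t)) hF hFm hF₂, map_withDensity_restrict_Ico
      AddCircle.measurable_mk' hgc (fun t => hη.le.trans (hgl t)) hG hGm hG₂, hF01.1, hF01.2,
      hG01.1, hG01.2, Measure.map_map hTm (by fun_prop), hTFinv, comp_def]
    simpa only [zero_add] using hGinv_periodic.map_comp_sub_restrict_Ico (by fun_prop) 0 α
  · calc ∫ t in (0:ℝ)..1, dist (t : AddCircle (1:ℝ)) (T t) ^ 2 * f t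
        = ∫ t in (0:ℝ)..1, dist (t : AddCircle (1:ℝ)) (Ginv (F t - α)) ^ 2 * f t := by
          simp only [hT]
      _ ≤ ∫ s in F 0..F 1, (Finv s - Ginv (s - α)) ^ 2 :=
        integral_dist_coe_sq_mul_le zero_le_one hfc hF hFm hF₁ hF₂ (ψ := fun s => Ginv (s - α))
          (by fun_prop)
      _ = ∫ s in (0:ℝ)..1, (Finv s - Ginv (s - α)) ^ 2 := by rw [hF01.1, hF01.2]

/-- For every α ∈ ℝ, the circle map induced by t ↦ G⁻¹(F(t) − α) pushes μ
forward to ν, and its transport cost is bounded by the corresponding line cost. -/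
theorem circle_map_pushforward_and_cost_le_line_cost
    (f g F G Finv Ginv : ℝ → ℝ) (η : ℝ) (hη : 0 < η)
    (hfc : Continuous f) (hgc : Continuous g)
    (hfp : Function.Periodic f 1) (hgp : Function.Periodic g 1)
    (hfl : ∀ t, η ≤ f t) (hgl : ∀ t, η ≤ g t)
    (hfm : (∫ t in (0:ℝ)..1, f t) = 1) (hgm : (∫ t in (0:ℝ)..1, g t) = 1)
    (hF : ∀ t, F t = ∫ τ in (0:ℝ)..t, f τ) (hG : ∀ t, G t = ∫ τ in (0:ℝ)..t, g τ)
    (hF₁ : Function.LeftInverse Finv F) (hF₂ : Function.RightInverse Finv F)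
    (hG₁ : Function.LeftInverse Ginv G) (hG₂ : Function.RightInverse Ginv G)
    (μ ν : Measure (AddCircle (1:ℝ)))
    (hμ : μ = Measure.map (fun t : ℝ => (t : AddCircle (1:ℝ)))
      ((volume.restrict (Set.Ico (0:ℝ) 1)).withDensity fun t => ENNReal.ofReal (f t)))
    (hν : ν = Measure.map (fun t : ℝ => (t : AddCircle (1:ℝ)))
      ((volume.restrict (Set.Ico (0:ℝ) 1)).withDensity fun t => ENNReal.ofReal (g t)))
    (α : ℝ) (T : AddCircle (1:ℝ) → AddCircle (1:ℝ))
    (hT : ∀ t : ℝ, T (t : AddCircle (1:ℝ)) = ((Ginv (F t - α) : ℝ) : AddCircle (1:ℝ))) :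
    Measure.map T μ = ν ∧
      (∫ t in (0:ℝ)..1, dist ((t : ℝ) : AddCircle (1:ℝ)) (T ((t : ℝ) : AddCircle (1:ℝ))) ^ 2 * f t)
        ≤ ∫ t in (0:ℝ)..1, (Finv t - Ginv (t - α)) ^ 2 :=
  circle_map_pushforward_and_cost_le_line_cost_general f g F G Finv Ginv η hη hfc hgc hgp hfl hgl
    hfm hgm hF hG hF₁ hF₂ hG₁ hG₂ μ ν hμ hν α T hT
end

section
/- Let f, g be admissible circle densities with cumulative distribution functions F, G and define I(α) = ∫₀¹ (F⁻¹(t) − G⁻¹(t − α))² dt. Then I is differentiable at every α ∈ ℝ and I′(α) = 2 ∫₀¹ F⁻¹(G(t) + α) dt − 1. -/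
open MeasureTheory Set Function

/-!
Differentiate under the integral sign: `Ginv` has derivative `(g ∘ Ginv)⁻¹`, so the derivative of
the integrand is jointly continuous and hence locally dominated. The substitution `t = G s + α`
turns `2 ∫₀¹ (Finv t - Ginv (t - α)) / g (Ginv (t - α)) dt` into the integral of
`2 (Finv (G s + α) - s)` over an interval of length one; this function is 1-periodic because
`G` and `Finv` both commute with translation by one, so the interval may be moved to `[0, 1]`,
where `∫₀¹ 2 s ds = 1`.
-/

section ParametricIntegral

variable {E : Type*} [NormedAddCommGroup E] [NormedSpace ℝ E]

theorem intervalIntegral.hasDerivAt_integral_of_continuous_deriv {F F' : ℝ → ℝ → E}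
    {a b : ℝ} (x₀ : ℝ) (hF : ∀ x, Continuous (F x)) (hF' : Continuous (uncurry F'))
    (h_diff : ∀ x t, HasDerivAt (fun x => F x t) (F' x t) x) :
    HasDerivAt (fun x => ∫ t in a..b, F x t) (∫ t in a..b, F' x₀ t) x₀ := by
  obtain ⟨C, hC⟩ := (isCompact_uIcc.prod (isCompact_closedBall x₀ 1)).exists_bound_of_continuousOn
    (hF'.comp continuous_swap).continuousOn
  refine (intervalIntegral.hasDerivAt_integral_of_dominated_loc_of_deriv_le (bound := fun _ => C)
    (Metric.closedBall_mem_nhds x₀ one_pos) (.of_forall fun x => (hF x).aestronglyMeasurable)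
    ((hF x₀).intervalIntegrable a b)
    (hF'.comp (continuous_const.prodMk continuous_id)).aestronglyMeasurable ?_
    intervalIntegrable_const (.of_forall fun t _ x _ => h_diff x t)).2
  exact .of_forall fun t ht x hx => hC (t, x) ⟨uIoc_subset_uIcc ht, hx⟩

end ParametricIntegral

theorem hasDerivAt_integral_sq_sub_comp_sub {u v v' : ℝ → ℝ} {a b : ℝ} (x₀ : ℝ)
    (hu : Continuous u) (hv : Continuous v) (hv' : Continuous v')
    (hv_deriv : ∀ y, HasDerivAt v (v' y) y) :
    HasDerivAt (fun x => ∫ t in a..b, (u t - v (t - x)) ^ 2)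
      (∫ t in a..b, 2 * (u t - v (t - x₀)) * v' (t - x₀)) x₀ := by
  refine intervalIntegral.hasDerivAt_integral_of_continuous_deriv
    (F' := fun x t => 2 * (u t - v (t - x)) * v' (t - x)) x₀
    (fun x => (hu.sub (hv.comp (continuous_sub_right x))).pow 2)
    (by simp only [uncurry_def]; fun_prop) fun x t => ?_
  refine (((hv_deriv (t - x)).comp_const_sub t x).const_sub (u t)).fun_pow 2 |>.congr_deriv ?_
  push_cast
  ring

section CircleCDF

variable {d D Dinv : ℝ → ℝ}

theorem hasDerivAt_of_eq_integral (hdc : Continuous d) (hD : ∀ t, D t = ∫ τ in (0:ℝ)..t, d τ)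
    (t : ℝ) : HasDerivAt D (d t) t := by
  rw [funext hD]
  exact hdc.integral_hasStrictDerivAt 0 t |>.hasDerivAt

theorem add_one_of_eq_integral_of_periodic (hdc : Continuous d) (hdp : Periodic d 1)
    (hdm : ∫ t in (0:ℝ)..1, d t = 1) (hD : ∀ t, D t = ∫ τ in (0:ℝ)..t, d τ) (t : ℝ) :
    D (t + 1) = D t + 1 := by
  rw [hD, hD, hdp.intervalIntegral_add_eq_add 0 t fun _ _ => hdc.intervalIntegrable _ _, zero_add,
    hdm]

theorem StrictMono.continuous_of_rightInverse_s5 (hD : StrictMono D) (hDinv : RightInverse Dinv D) :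
    Continuous Dinv :=
  (hD.orderIsoOfRightInverse D Dinv hDinv).symm.continuous

theorem inverse_add_of_add (h₁ : LeftInverse Dinv D) (h₂ : RightInverse Dinv D) {a b : ℝ}
    (hD : ∀ t, D (t + a) = D t + b) (y : ℝ) : Dinv (y + b) = Dinv y + a := by
  rw [← h₁ (Dinv y + a), hD, h₂]

end CircleCDF

section Substitution

variable {g G Ginv Finv : ℝ → ℝ}

theorem integral_mul_inv_comp_inverse_eq (hgc : Continuous g) (hg : ∀ s, g s ≠ 0)
    (hG' : ∀ s, HasDerivAt G (g s) s) (hG₁ : LeftInverse Ginv G) (hGinvc : Continuous Ginv)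
    {k : ℝ → ℝ} (hk : Continuous k) (a b c : ℝ) :
    ∫ t in (G a + c)..(G b + c), k t * (g (Ginv (t - c)))⁻¹ = ∫ s in a..b, k (G s + c) := by
  have hint : Continuous fun t => k t * (g (Ginv (t - c)))⁻¹ :=
    hk.mul <| (hgc.comp (hGinvc.comp (continuous_sub_right c))).inv₀ fun _ => hg _
  rw [← intervalIntegral.integral_comp_mul_deriv (fun s _ => (hG' s).add_const c)
    hgc.continuousOn hint]
  refine intervalIntegral.integral_congr fun s _ => ?_
  simp only [comp_apply, add_sub_cancel_right, hG₁ s]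
  field_simp [hg s]

theorem integral_two_mul_sub_mul_inv_comp_inverse_eq (hgc : Continuous g) (hg : ∀ s, g s ≠ 0)
    (hG' : ∀ s, HasDerivAt G (g s) s) (hG₁ : LeftInverse Ginv G) (hG₂ : RightInverse Ginv G)
    (hGinvc : Continuous Ginv) (hG_add : ∀ t, G (t + 1) = G t + 1)
    (hFinvc : Continuous Finv) (hFinv_add : ∀ y, Finv (y + 1) = Finv y + 1) (α : ℝ) :
    ∫ t in (0:ℝ)..1, 2 * (Finv t - Ginv (t - α)) * (g (Ginv (t - α)))⁻¹
      = 2 * (∫ t in (0:ℝ)..1, Finv (G t + α)) - 1 := by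
  set a := Ginv (-α)
  have ha : G a + α = 0 := by rw [hG₂]; ring
  have ha' : G (a + 1) + α = 1 := by rw [hG_add]; linarith
  have hper : Periodic (fun s => 2 * (Finv (G s + α) - s)) 1 := fun s => by
    simp only [hG_add, add_right_comm _ (1:ℝ), hFinv_add]
    ring
  have hFG : Continuous fun s => Finv (G s + α) :=
    hFinvc.comp ((continuous_iff_continuousAt.2 fun t => (hG' t).continuousAt).add_const α)
  calc ∫ t in (0:ℝ)..1, 2 * (Finv t - Ginv (t - α)) * (g (Ginv (t - α)))⁻¹
      = ∫ s in a..a + 1, 2 * (Finv (G s + α) - Ginv (G s + α - α)) := by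
        have h := integral_mul_inv_comp_inverse_eq hgc hg hG' hG₁ hGinvc
          (k := fun t => 2 * (Finv t - Ginv (t - α))) (by fun_prop) a (a + 1) α
        rwa [ha, ha'] at h
    _ = ∫ s in a..a + 1, 2 * (Finv (G s + α) - s) := by simp only [add_sub_cancel_right, hG₁ _]
    _ = ∫ s in (0:ℝ)..1, 2 * (Finv (G s + α) - s) := by
        rw [hper.intervalIntegral_add_eq a 0, zero_add]
    _ = 2 * (∫ t in (0:ℝ)..1, Finv (G t + α)) - 1 := by
        rw [intervalIntegral.integral_const_mul, intervalIntegral.integral_sub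
          (hFG.intervalIntegrable 0 1) (continuous_id'.intervalIntegrable 0 1), integral_id]
        ring

end Substitution

/-- I is differentiable with I′(α) = 2 ∫₀¹ F⁻¹(G(t) + α) dt − 1. -/
theorem I_hasDerivAt
    (f g F G Finv Ginv : ℝ → ℝ) (η : ℝ) (hη : 0 < η)
    (hfc : Continuous f) (hgc : Continuous g)
    (hfp : Function.Periodic f 1) (hgp : Function.Periodic g 1)
    (hfl : ∀ t, η ≤ f t) (hgl : ∀ t, η ≤ g t)
    (hfm : (∫ t in (0:ℝ)..1, f t) = 1) (hgm : (∫ t in (0:ℝ)..1, g t) = 1)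
    (hF : ∀ t, F t = ∫ τ in (0:ℝ)..t, f τ) (hG : ∀ t, G t = ∫ τ in (0:ℝ)..t, g τ)
    (hF₁ : Function.LeftInverse Finv F) (hF₂ : Function.RightInverse Finv F)
    (hG₁ : Function.LeftInverse Ginv G) (hG₂ : Function.RightInverse Ginv G)
    (I : ℝ → ℝ) (hI : ∀ α, I α = ∫ t in (0:ℝ)..1, (Finv t - Ginv (t - α)) ^ 2)
    (α : ℝ) :
    HasDerivAt I (2 * (∫ t in (0:ℝ)..1, Finv (G t + α)) - 1) α := by
  have hF' := hasDerivAt_of_eq_integral hfc hF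
  have hG' := hasDerivAt_of_eq_integral hgc hG
  have hg_pos : ∀ t, 0 < g t := fun t => hη.trans_le (hgl t)
  have hFinvc : Continuous Finv :=
    (strictMono_of_hasDerivAt_pos hF' fun t => hη.trans_le (hfl t)).continuous_of_rightInverse_s5 hF₂
  have hGinvc : Continuous Ginv :=
    (strictMono_of_hasDerivAt_pos hG' hg_pos).continuous_of_rightInverse_s5 hG₂
  have hG_add := add_one_of_eq_integral_of_periodic hgc hgp hgm hG
  have hFinv_add :=
    inverse_add_of_add hF₁ hF₂ (add_one_of_eq_integral_of_periodic hfc hfp hfm hF)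
  have hGinv' (y : ℝ) : HasDerivAt Ginv (g (Ginv y))⁻¹ y :=
    (hG' _).of_local_left_inverse hGinvc.continuousAt (hg_pos _).ne' (.of_forall hG₂)
  rw [funext hI, ← integral_two_mul_sub_mul_inv_comp_inverse_eq hgc (fun s => (hg_pos s).ne') hG'
    hG₁ hG₂ hGinvc hG_add hFinvc hFinv_add]
  exact hasDerivAt_integral_sq_sub_comp_sub α hFinvc hGinvc
    ((hgc.comp hGinvc).inv₀ fun _ => (hg_pos _).ne') hGinv'
end

section
/- For i = 1, 2 let fᵢ, gᵢ be continuously differentiable admissible circle densities, and let α(fᵢ, gᵢ) denote the unique global minimizer over ℝ of the function α ↦ ∫₀¹ (Fᵢ⁻¹(t) − Gᵢ⁻¹(t − α))² dt, where Fᵢ, Gᵢ are the cumulative distribution functions of fᵢ, gᵢ. Then |α(f₁, g₁) − α(f₂, g₂)| ≤ ½ (∫₀¹ |f₁(t) − f₂(t)| dt + ∫₀¹ |g₁(t) − g₂(t)| dt). -/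
/-!
A minimizer `α` of `I(α) = ∫₀¹ (F⁻¹ t - G⁻¹ (t - α))² dt` is a critical point; differentiating
under the integral and substituting `t = G u + α` turns `I'(α) = 0` into
`θ(α) = ∫₀¹ (F⁻¹ (G u + α) - u) du = 0`, and `θ` is strictly increasing in `α`.
The difference `F₁ - F₂` of two circle CDFs is periodic and vanishes at `0` and `1`, so
`|F₁ - F₂| ≤ ½ ‖f₁ - f₂‖₁`, and likewise for `G`. With `δ` the right-hand side this gives
`θ₂(α₁ - δ) ≤ θ₁(α₁) ≤ θ₂(α₁ + δ)`, and `θ₁(α₁) = 0 = θ₂(α₂)` traps `α₂` in `[α₁ - δ, α₁ + δ]`.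
-/

open MeasureTheory Set Function

theorem hasDerivAt_intervalIntegral_of_continuous {E : Type*} [NormedAddCommGroup E]
    [NormedSpace ℝ E] {F F' : ℝ → ℝ → E} (hF : Continuous (uncurry F))
    (hF' : Continuous (uncurry F')) (hd : ∀ x t, HasDerivAt (fun x => F x t) (F' x t) x)
    (a b x₀ : ℝ) :
    HasDerivAt (fun x => ∫ t in a..b, F x t) (∫ t in a..b, F' x₀ t) x₀ := by
  obtain ⟨C, hC⟩ := ((isCompact_closedBall x₀ 1).prod isCompact_uIcc).exists_bound_of_continuousOn
    (f := uncurry F') (hF'.continuousOn)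
  have hFx : ∀ x, Continuous (F x) := fun x => hF.comp (Continuous.prodMk_right x)
  refine (intervalIntegral.hasDerivAt_integral_of_dominated_loc_of_deriv_le
    (bound := fun _ => C) (Metric.ball_mem_nhds x₀ one_pos)
    (.of_forall fun x => (hFx x).aestronglyMeasurable) ((hFx x₀).intervalIntegrable a b)
    (hF'.comp (Continuous.prodMk_right x₀)).aestronglyMeasurable ?_ intervalIntegrable_const
    (.of_forall fun t _ x _ => hd x t)).2
  refine .of_forall fun t ht x hx => hC (x, t) ⟨Metric.ball_subset_closedBall hx, ?_⟩
  exact uIoc_subset_uIcc ht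

theorem hasDerivAt_of_forall_eq_integral {f F : ℝ → ℝ} (hf : Continuous f)
    (hF : ∀ t, F t = ∫ τ in (0:ℝ)..t, f τ) (x : ℝ) : HasDerivAt F (f x) x := by
  rw [funext hF]
  exact (hf.integral_hasStrictDerivAt 0 x).hasDerivAt

theorem abs_integral_le_half_integral_abs_of_integral_eq_zero {h : ℝ → ℝ} {a b x : ℝ}
    (hh : Continuous h) (h₀ : ∫ t in a..b, h t = 0) (hx : x ∈ Icc a b) :
    |∫ t in a..x, h t| ≤ (1 / 2) * ∫ t in a..b, |h t| := by
  have hsplit := intervalIntegral.integral_add_adjacent_intervals (μ := volume)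
    (hh.intervalIntegrable a x) (hh.intervalIntegrable x b)
  have habs := intervalIntegral.integral_add_adjacent_intervals (μ := volume)
    (hh.abs.intervalIntegrable a x) (hh.abs.intervalIntegrable x b)
  have h₁ := intervalIntegral.abs_integral_le_integral_abs (f := h) (μ := volume) hx.1
  have h₂ := intervalIntegral.abs_integral_le_integral_abs (f := h) (μ := volume) hx.2
  rw [h₀, ← neg_eq_iff_add_eq_zero] at hsplit
  rw [← hsplit, abs_neg] at h₂
  linarith

structure IsAdmissibleDensity (f : ℝ → ℝ) : Prop where
  continuous : Continuous f
  pos : ∀ t, 0 < f t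
  periodic : Periodic f 1
  integral_eq_one : ∫ t in (0:ℝ)..1, f t = 1

namespace IsAdmissibleDensity

variable {f F : ℝ → ℝ}

theorem strictMono_cdf (hf : IsAdmissibleDensity f) (hF : ∀ t, F t = ∫ τ in (0:ℝ)..t, f τ) :
    StrictMono F :=
  strictMono_of_hasDerivAt_pos (hasDerivAt_of_forall_eq_integral hf.continuous hF) hf.pos

theorem cdf_add_one (hf : IsAdmissibleDensity f) (hF : ∀ t, F t = ∫ τ in (0:ℝ)..t, f τ)
    (x : ℝ) : F (x + 1) = F x + 1 := by
  have hshift : ∫ τ in x..x + 1, f τ = 1 := by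
    rw [hf.periodic.intervalIntegral_add_eq x 0, zero_add, hf.integral_eq_one]
  rw [hF, hF, ← intervalIntegral.integral_add_adjacent_intervals
    (hf.continuous.intervalIntegrable 0 x) (hf.continuous.intervalIntegrable x (x + 1)), hshift]

theorem exists_orderIso_cdf {Finv : ℝ → ℝ} (hf : IsAdmissibleDensity f)
    (hF : ∀ t, F t = ∫ τ in (0:ℝ)..t, f τ) (hFinv : RightInverse Finv F) :
    ∃ e : ℝ ≃o ℝ, ⇑e = F ∧ ⇑e.symm = Finv :=
  ⟨(hf.strictMono_cdf hF).orderIsoOfRightInverse F Finv hFinv, rfl, rfl⟩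

theorem abs_cdf_sub_cdf_le {f₁ f₂ F₁ F₂ : ℝ → ℝ} (hf₁ : IsAdmissibleDensity f₁)
    (hf₂ : IsAdmissibleDensity f₂) (hF₁ : ∀ t, F₁ t = ∫ τ in (0:ℝ)..t, f₁ τ)
    (hF₂ : ∀ t, F₂ t = ∫ τ in (0:ℝ)..t, f₂ τ) (x : ℝ) :
    |F₁ x - F₂ x| ≤ (1 / 2) * ∫ t in (0:ℝ)..1, |f₁ t - f₂ t| := by
  have hc := hf₁.continuous.sub hf₂.continuous
  have hdiff : ∀ y, F₁ y - F₂ y = ∫ t in (0:ℝ)..y, (f₁ t - f₂ t) := fun y => by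
    rw [hF₁, hF₂, intervalIntegral.integral_sub (hf₁.continuous.intervalIntegrable 0 y)
      (hf₂.continuous.intervalIntegrable 0 y)]
  have hper : Periodic (fun y => F₁ y - F₂ y) 1 := fun y => by
    simp only [hf₁.cdf_add_one hF₁, hf₂.cdf_add_one hF₂]
    ring
  have hmean : ∫ t in (0:ℝ)..1, (f₁ t - f₂ t) = 0 := by
    rw [← hdiff, hF₁, hF₂, hf₁.integral_eq_one, hf₂.integral_eq_one, sub_self]
  have hfract : F₁ x - F₂ x = F₁ (Int.fract x) - F₂ (Int.fract x) := by
    have := hper.sub_int_mul_eq (x := x) ⌊x⌋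
    rw [mul_one] at this
    exact this.symm
  rw [hfract, hdiff]
  exact abs_integral_le_half_integral_abs_of_integral_eq_zero hc hmean
    ⟨Int.fract_nonneg x, (Int.fract_lt_one x).le⟩

end IsAdmissibleDensity

namespace OrderIso

theorem symm_add_one {e : ℝ ≃o ℝ} (he : ∀ x, e (x + 1) = e x + 1) (s : ℝ) :
    e.symm (s + 1) = e.symm s + 1 := by
  rw [symm_apply_eq, he, apply_symm_apply]

theorem symm_le_symm_add {e₁ e₂ : ℝ ≃o ℝ} {d : ℝ} (h : ∀ x, e₂ x ≤ e₁ x + d) (s : ℝ) :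
    e₁.symm s ≤ e₂.symm (s + d) := by
  rw [le_symm_apply]
  simpa using h (e₁.symm s)

theorem hasDerivAt_symm {e : ℝ ≃o ℝ} {g : ℝ → ℝ} (he : ∀ u, HasDerivAt e (g u) u)
    (hg : ∀ u, 0 < g u) (s : ℝ) : HasDerivAt e.symm (g (e.symm s))⁻¹ s :=
  .of_local_left_inverse e.symm.continuous.continuousAt (he _) (hg _).ne'
    (.of_forall e.apply_symm_apply)

end OrderIso

noncomputable def transportCost (P Q : ℝ → ℝ) (α : ℝ) : ℝ :=
  ∫ t in (0:ℝ)..1, (P t - Q (t - α)) ^ 2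

noncomputable def meanDisplacement (P G : ℝ → ℝ) (α : ℝ) : ℝ :=
  ∫ u in (0:ℝ)..1, (P (G u + α) - u)

theorem hasDerivAt_transportCost {P Q q : ℝ → ℝ} (hP : Continuous P)
    (hQ : ∀ s, HasDerivAt Q (q s) s) (hq : Continuous q) (α : ℝ) :
    HasDerivAt (transportCost P Q) (∫ t in (0:ℝ)..1, 2 * (P t - Q (t - α)) * q (t - α)) α := by
  have hQc : Continuous Q := continuous_iff_continuousAt.2 fun s => (hQ s).continuousAt
  have hF : Continuous fun p : ℝ × ℝ => (P p.2 - Q (p.2 - p.1)) ^ 2 := by fun_prop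
  have hF' : Continuous fun p : ℝ × ℝ => 2 * (P p.2 - Q (p.2 - p.1)) * q (p.2 - p.1) := by
    fun_prop
  refine hasDerivAt_intervalIntegral_of_continuous (F := fun x t => (P t - Q (t - x)) ^ 2)
    (F' := fun x t => 2 * (P t - Q (t - x)) * q (t - x)) hF hF' (fun x t => ?_) 0 1 α
  have hsub : HasDerivAt (fun x => t - x) (-1) x := by simpa using (hasDerivAt_id x).const_sub t
  refine ((((hQ (t - x)).comp x hsub).const_sub (P t)).fun_pow 2).congr_deriv ?_
  simp only [comp_apply]
  ring

theorem integral_mul_deriv_symm_eq_meanDisplacement {P g : ℝ → ℝ} {G : ℝ ≃o ℝ}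
    (hP : Continuous P) (hP1 : ∀ s, P (s + 1) = P s + 1) (hg : IsAdmissibleDensity g)
    (hG : ∀ u, G u = ∫ τ in (0:ℝ)..u, g τ) (α : ℝ) :
    ∫ t in (0:ℝ)..1, (P t - G.symm (t - α)) * (g (G.symm (t - α)))⁻¹ =
      meanDisplacement P G α := by
  set a := G.symm (-α)
  have hGa : G a + α = 0 := by simp [a]
  have hGa1 : G (a + 1) + α = 1 := by
    rw [hg.cdf_add_one hG, add_right_comm, hGa, zero_add]
  have hinv : Continuous fun t => (g (G.symm (t - α)))⁻¹ :=
    (hg.continuous.comp (G.symm.continuous.comp (continuous_sub_right α))).inv₀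
      fun t => (hg.pos _).ne'
  have hsubst := intervalIntegral.integral_comp_mul_deriv (a := a) (b := a + 1)
    (g := fun t => (P t - G.symm (t - α)) * (g (G.symm (t - α)))⁻¹)
    (fun u _ => (hasDerivAt_of_forall_eq_integral hg.continuous hG u).add_const α)
    hg.continuous.continuousOn
    ((hP.sub (G.symm.continuous.comp (continuous_sub_right α))).mul hinv)
  rw [hGa, hGa1] at hsubst
  have hper : Periodic (fun u => P (G u + α) - u) 1 := fun u => by
    simp only [hg.cdf_add_one hG, add_right_comm _ (1:ℝ) α, hP1]
    ring
  calc _ = ∫ u in a..a + 1, (P (G u + α) - u) := by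
        rw [← hsubst]
        refine intervalIntegral.integral_congr fun u _ => ?_
        simp only [comp_apply, add_sub_cancel_right, OrderIso.symm_apply_apply]
        rw [inv_mul_cancel_right₀ (hg.pos u).ne']
    _ = meanDisplacement P G α := by
        simpa only [zero_add, meanDisplacement] using hper.intervalIntegral_add_eq a 0

theorem meanDisplacement_eq_zero_of_isLocalMin {P g : ℝ → ℝ} {G : ℝ ≃o ℝ} {α : ℝ}
    (hP : Continuous P) (hP1 : ∀ s, P (s + 1) = P s + 1) (hg : IsAdmissibleDensity g)
    (hG : ∀ u, G u = ∫ τ in (0:ℝ)..u, g τ) (hα : IsLocalMin (transportCost P G.symm) α) :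
    meanDisplacement P G α = 0 := by
  have hq : Continuous fun s => (g (G.symm s))⁻¹ :=
    (hg.continuous.comp' G.symm.continuous).inv₀ fun s => (hg.pos _).ne'
  have hderiv := hasDerivAt_transportCost hP
    (G.hasDerivAt_symm (hasDerivAt_of_forall_eq_integral hg.continuous hG) hg.pos) hq α
  have hzero := hα.hasDerivAt_eq_zero hderiv
  simp only [mul_assoc, intervalIntegral.integral_const_mul, mul_eq_zero,
    two_ne_zero, false_or, integral_mul_deriv_symm_eq_meanDisplacement hP hP1 hg hG] at hzero
  exact hzero

theorem meanDisplacement_strictMono {P G : ℝ → ℝ} (hP : Continuous P) (hPm : StrictMono P)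
    (hG : Continuous G) : StrictMono (meanDisplacement P G) := fun α β hαβ =>
  intervalIntegral.integral_lt_integral_of_continuousOn_of_le_of_exists_lt zero_lt_one
    (by fun_prop) (by fun_prop)
    (fun u _ => sub_le_sub_right (hPm.monotone (by linarith)) u)
    ⟨0, left_mem_Icc.2 zero_le_one, sub_lt_sub_right (hPm (by linarith)) 0⟩

theorem meanDisplacement_le_add {F₁ F₂ G₁ G₂ : ℝ ≃o ℝ} {dF dG : ℝ}
    (hF : ∀ x, |F₁ x - F₂ x| ≤ dF) (hG : ∀ x, |G₁ x - G₂ x| ≤ dG) (α : ℝ) :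
    meanDisplacement F₁.symm G₁ α ≤ meanDisplacement F₂.symm G₂ (α + (dF + dG)) := by
  have hc : ∀ (F G : ℝ ≃o ℝ) β, Continuous fun u => F.symm (G u + β) - u := fun F G β =>
    (F.symm.continuous.comp (G.continuous.add continuous_const)).sub continuous_id
  refine intervalIntegral.integral_mono_on zero_le_one ((hc _ _ _).intervalIntegrable 0 1)
    ((hc _ _ _).intervalIntegrable 0 1) fun u _ => sub_le_sub_right ?_ u
  have hF₂ : ∀ x, F₂ x ≤ F₁ x + dF := fun x => by linarith [abs_le.1 (hF x)]
  have hG₁ : G₁ u + α + dF ≤ G₂ u + (α + (dF + dG)) := by linarith [abs_le.1 (hG u)]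
  exact (OrderIso.symm_le_symm_add hF₂ _).trans (F₂.symm.monotone hG₁)

theorem alpha_stability_estimate_general
    (f₁ g₁ F₁ G₁ Finv₁ Ginv₁ f₂ g₂ F₂ G₂ Finv₂ Ginv₂ : ℝ → ℝ) (η : ℝ) (hη : 0 < η)
    (hf₁c : ContDiff ℝ 1 f₁) (hg₁c : ContDiff ℝ 1 g₁)
    (hf₂c : ContDiff ℝ 1 f₂) (hg₂c : ContDiff ℝ 1 g₂)
    (hf₁p : Function.Periodic f₁ 1) (hg₁p : Function.Periodic g₁ 1)
    (hf₂p : Function.Periodic f₂ 1) (hg₂p : Function.Periodic g₂ 1)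
    (hf₁l : ∀ t, η ≤ f₁ t) (hg₁l : ∀ t, η ≤ g₁ t)
    (hf₂l : ∀ t, η ≤ f₂ t) (hg₂l : ∀ t, η ≤ g₂ t)
    (hf₁m : (∫ t in (0:ℝ)..1, f₁ t) = 1) (hg₁m : (∫ t in (0:ℝ)..1, g₁ t) = 1)
    (hf₂m : (∫ t in (0:ℝ)..1, f₂ t) = 1) (hg₂m : (∫ t in (0:ℝ)..1, g₂ t) = 1)
    (hF₁ : ∀ t, F₁ t = ∫ τ in (0:ℝ)..t, f₁ τ) (hG₁ : ∀ t, G₁ t = ∫ τ in (0:ℝ)..t, g₁ τ)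
    (hF₂ : ∀ t, F₂ t = ∫ τ in (0:ℝ)..t, f₂ τ) (hG₂ : ∀ t, G₂ t = ∫ τ in (0:ℝ)..t, g₂ τ)
    (hF₁i' : Function.RightInverse Finv₁ F₁)
    (hG₁i' : Function.RightInverse Ginv₁ G₁)
    (hF₂i' : Function.RightInverse Finv₂ F₂)
    (hG₂i' : Function.RightInverse Ginv₂ G₂)
    (α₁ α₂ : ℝ)
    (hα₁ : ∀ α : ℝ, (∫ t in (0:ℝ)..1, (Finv₁ t - Ginv₁ (t - α₁)) ^ 2)
      ≤ ∫ t in (0:ℝ)..1, (Finv₁ t - Ginv₁ (t - α)) ^ 2)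
    (hα₂ : ∀ α : ℝ, (∫ t in (0:ℝ)..1, (Finv₂ t - Ginv₂ (t - α₂)) ^ 2)
      ≤ ∫ t in (0:ℝ)..1, (Finv₂ t - Ginv₂ (t - α)) ^ 2) :
    |α₁ - α₂| ≤ (1 / 2) * ((∫ t in (0:ℝ)..1, |f₁ t - f₂ t|) + ∫ t in (0:ℝ)..1, |g₁ t - g₂ t|) := by
  have hf₁ : IsAdmissibleDensity f₁ :=
    ⟨hf₁c.continuous, fun t => hη.trans_le (hf₁l t), hf₁p, hf₁m⟩
  have hg₁ : IsAdmissibleDensity g₁ :=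
    ⟨hg₁c.continuous, fun t => hη.trans_le (hg₁l t), hg₁p, hg₁m⟩
  have hf₂ : IsAdmissibleDensity f₂ :=
    ⟨hf₂c.continuous, fun t => hη.trans_le (hf₂l t), hf₂p, hf₂m⟩
  have hg₂ : IsAdmissibleDensity g₂ :=
    ⟨hg₂c.continuous, fun t => hη.trans_le (hg₂l t), hg₂p, hg₂m⟩
  have hF := hf₁.abs_cdf_sub_cdf_le hf₂ hF₁ hF₂
  have hG := hg₁.abs_cdf_sub_cdf_le hg₂ hG₁ hG₂
  obtain ⟨eF₁, rfl, rfl⟩ := hf₁.exists_orderIso_cdf hF₁ hF₁i'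
  obtain ⟨eG₁, rfl, rfl⟩ := hg₁.exists_orderIso_cdf hG₁ hG₁i'
  obtain ⟨eF₂, rfl, rfl⟩ := hf₂.exists_orderIso_cdf hF₂ hF₂i'
  obtain ⟨eG₂, rfl, rfl⟩ := hg₂.exists_orderIso_cdf hG₂ hG₂i'
  have hθ₁ := meanDisplacement_eq_zero_of_isLocalMin eF₁.symm.continuous
    (eF₁.symm_add_one (hf₁.cdf_add_one hF₁)) hg₁ hG₁ (.of_forall hα₁)
  have hθ₂ := meanDisplacement_eq_zero_of_isLocalMin eF₂.symm.continuous
    (eF₂.symm_add_one (hf₂.cdf_add_one hF₂)) hg₂ hG₂ (.of_forall hα₂)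
  rw [mul_add]
  set δ := (1 / 2) * (∫ t in (0:ℝ)..1, |f₁ t - f₂ t|) + (1 / 2) * ∫ t in (0:ℝ)..1, |g₁ t - g₂ t|
  have hup := meanDisplacement_le_add hF hG α₁
  have hdn := meanDisplacement_le_add (fun x => (abs_sub_comm _ _).trans_le (hF x))
    (fun x => (abs_sub_comm _ _).trans_le (hG x)) (α₁ - δ)
  rw [sub_add_cancel] at hdn
  have hmono := meanDisplacement_strictMono eF₂.symm.continuous eF₂.symm.strictMono eG₂.continuous
  have h₁ : α₂ ≤ α₁ + δ := hmono.le_iff_le.1 (hθ₂.trans_le (hθ₁.symm.trans_le hup))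
  have h₂ : α₁ - δ ≤ α₂ := hmono.le_iff_le.1 (hdn.trans_eq (hθ₁.trans hθ₂.symm))
  exact abs_sub_le_iff.2 ⟨by linarith, by linarith⟩

/-- stability estimate for the minimizer α(f,g) of
I(α; f, g) = ∫₀¹ (F⁻¹(t) − G⁻¹(t − α))² dt with respect to L¹-perturbations of the
continuously differentiable admissible densities. -/
theorem alpha_stability_estimate
    (f₁ g₁ F₁ G₁ Finv₁ Ginv₁ f₂ g₂ F₂ G₂ Finv₂ Ginv₂ : ℝ → ℝ) (η : ℝ) (hη : 0 < η)
    (hf₁c : ContDiff ℝ 1 f₁) (hg₁c : ContDiff ℝ 1 g₁)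
    (hf₂c : ContDiff ℝ 1 f₂) (hg₂c : ContDiff ℝ 1 g₂)
    (hf₁p : Function.Periodic f₁ 1) (hg₁p : Function.Periodic g₁ 1)
    (hf₂p : Function.Periodic f₂ 1) (hg₂p : Function.Periodic g₂ 1)
    (hf₁l : ∀ t, η ≤ f₁ t) (hg₁l : ∀ t, η ≤ g₁ t)
    (hf₂l : ∀ t, η ≤ f₂ t) (hg₂l : ∀ t, η ≤ g₂ t)
    (hf₁m : (∫ t in (0:ℝ)..1, f₁ t) = 1) (hg₁m : (∫ t in (0:ℝ)..1, g₁ t) = 1)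
    (hf₂m : (∫ t in (0:ℝ)..1, f₂ t) = 1) (hg₂m : (∫ t in (0:ℝ)..1, g₂ t) = 1)
    (hF₁ : ∀ t, F₁ t = ∫ τ in (0:ℝ)..t, f₁ τ) (hG₁ : ∀ t, G₁ t = ∫ τ in (0:ℝ)..t, g₁ τ)
    (hF₂ : ∀ t, F₂ t = ∫ τ in (0:ℝ)..t, f₂ τ) (hG₂ : ∀ t, G₂ t = ∫ τ in (0:ℝ)..t, g₂ τ)
    (hF₁i : Function.LeftInverse Finv₁ F₁) (hF₁i' : Function.RightInverse Finv₁ F₁)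
    (hG₁i : Function.LeftInverse Ginv₁ G₁) (hG₁i' : Function.RightInverse Ginv₁ G₁)
    (hF₂i : Function.LeftInverse Finv₂ F₂) (hF₂i' : Function.RightInverse Finv₂ F₂)
    (hG₂i : Function.LeftInverse Ginv₂ G₂) (hG₂i' : Function.RightInverse Ginv₂ G₂)
    (α₁ α₂ : ℝ)
    (hα₁ : ∀ α : ℝ, (∫ t in (0:ℝ)..1, (Finv₁ t - Ginv₁ (t - α₁)) ^ 2)
      ≤ ∫ t in (0:ℝ)..1, (Finv₁ t - Ginv₁ (t - α)) ^ 2)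
    (hα₂ : ∀ α : ℝ, (∫ t in (0:ℝ)..1, (Finv₂ t - Ginv₂ (t - α₂)) ^ 2)
      ≤ ∫ t in (0:ℝ)..1, (Finv₂ t - Ginv₂ (t - α)) ^ 2) :
    |α₁ - α₂| ≤ (1 / 2) * ((∫ t in (0:ℝ)..1, |f₁ t - f₂ t|) + ∫ t in (0:ℝ)..1, |g₁ t - g₂ t|) :=
  alpha_stability_estimate_general f₁ g₁ F₁ G₁ Finv₁ Ginv₁ f₂ g₂ F₂ G₂ Finv₂ Ginv₂ η hη hf₁c hg₁c
    hf₂c hg₂c hf₁p hg₁p hf₂p hg₂p hf₁l hg₁l hf₂l hg₂l hf₁m hg₁m hf₂m hg₂m hF₁ hG₁ hF₂ hG₂ hF₁i'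
    hG₁i' hF₂i' hG₂i' α₁ α₂ hα₁ hα₂
end
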